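/- arXiv:1904.01855 — 2 statements merged into one kernel-verified Lean document; each statement's English description precedes it below -/
import Mathlib

section
/- (Local conservation law of SMD.) Let ψ : ℝ^p → ℝ be a strictly convex differentiable function with Bregman divergence D_ψ, let ℓ : ℝ → ℝ be differentiable, let f : ℝ^m × ℝ^p → ℝ be differentiable in its second argument, let x_i ∈ ℝ^m, y_i ∈ ℝ, and define the instantaneous loss L_i(w) = ℓ(y_i − f(x_i, w)) and its (formal) Bregman divergence D_{L_i}(w, w') = L_i(w) − L_i(w') − ∇L_i(w')ᵀ(w − w'). Let η > 0 and suppose w_i ∈ ℝ^p satisfies the SMD update ∇ψ(w_i) = ∇ψ(w_{i−1}) − η ∇L_i(w_{i−1}). Define E_i(w_i, w_{i−1}) = D_{ψ−ηL_i}(w_i, w_{i−1}) + η L_i(w_i). Then for every w ∈ ℝ^p, with v_i = y_i − f(x_i, w): D_ψ(w, w_{i−1}) + η ℓ(v_i) = D_ψ(w, w_i) + η D_{L_i}(w, w_{i−1}) + E_i(w_i, w_{i−1}). -/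
/-!
By the three-point identity, `D_ψ(w, w_{i-1}) - D_ψ(w, w_i) - D_ψ(w_i, w_{i-1})` is
`⟪∇ψ(w_i) - ∇ψ(w_{i-1}), w - w_i⟫`, which the update rule turns into `-η ⟪∇L_i(w_{i-1}), w - w_i⟫`.
The Bregman divergence is linear in its potential, so `D_{ψ-ηL_i} = D_ψ - η D_{L_i}`, and
`D_{L_i}(w, w_{i-1}) - D_{L_i}(w_i, w_{i-1}) = L_i(w) - L_i(w_i) - ⟪∇L_i(w_{i-1}), w - w_i⟫`
absorbs that cross term.
-/

open RealInnerProductSpace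

/-- Bregman divergence of a differentiable function `g` (defined formally for any `g`). -/
noncomputable def bregman {p : ℕ} (g : EuclideanSpace ℝ (Fin p) → ℝ)
    (w w' : EuclideanSpace ℝ (Fin p)) : ℝ :=
  g w - g w' - ⟪gradient g w', w - w'⟫

theorem gradient_fun_sub_const_mul {F : Type*} [NormedAddCommGroup F] [InnerProductSpace ℝ F]
    [CompleteSpace F] {f g : F → ℝ} {x : F} (hf : DifferentiableAt ℝ f x)
    (hg : DifferentiableAt ℝ g x) (c : ℝ) :
    gradient (fun u => f u - c * g u) x = gradient f x - c • gradient g x := by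
  simp only [gradient, fderiv_fun_sub hf (hg.const_mul c), fderiv_const_mul hg, map_sub, map_smul]

section Bregman

variable {p : ℕ}

theorem bregman_fun_sub_const_mul {f g : EuclideanSpace ℝ (Fin p) → ℝ}
    {w w' : EuclideanSpace ℝ (Fin p)} (hf : DifferentiableAt ℝ f w')
    (hg : DifferentiableAt ℝ g w') (c : ℝ) :
    bregman (fun u => f u - c * g u) w w' = bregman f w w' - c * bregman g w w' := by
  simp only [bregman, gradient_fun_sub_const_mul hf hg, inner_sub_left, real_inner_smul_left]
  ring

theorem bregman_three_point (g : EuclideanSpace ℝ (Fin p) → ℝ)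
    (w w' w'' : EuclideanSpace ℝ (Fin p)) :
    bregman g w w'' =
      bregman g w w' + bregman g w' w'' + ⟪gradient g w' - gradient g w'', w - w'⟫ := by
  simp only [bregman, inner_sub_left, inner_sub_right]
  ring

theorem bregman_sub_bregman (g : EuclideanSpace ℝ (Fin p) → ℝ)
    (w w' w'' : EuclideanSpace ℝ (Fin p)) :
    bregman g w w'' - bregman g w' w'' = g w - g w' - ⟪gradient g w'', w - w'⟫ := by
  simp only [bregman, inner_sub_right]
  ring

theorem bregman_conservation_of_gradient_eq {ψ L : EuclideanSpace ℝ (Fin p) → ℝ}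
    {w' w'' : EuclideanSpace ℝ (Fin p)} (hψ : DifferentiableAt ℝ ψ w'')
    (hL : DifferentiableAt ℝ L w'') {η : ℝ}
    (hstep : gradient ψ w' = gradient ψ w'' - η • gradient L w'')
    (w : EuclideanSpace ℝ (Fin p)) :
    bregman ψ w w'' + η * L w =
      bregman ψ w w' + η * bregman L w w'' +
        (bregman (fun u => ψ u - η * L u) w' w'' + η * L w') := by
  rw [bregman_fun_sub_const_mul hψ hL, bregman_three_point ψ w w' w'', hstep,
    sub_sub_cancel_left, inner_neg_left, real_inner_smul_left]
  linear_combination (-η) * bregman_sub_bregman L w w' w''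

end Bregman

theorem smd_local_conservation_law_general {m p : ℕ}
    (ψ : EuclideanSpace ℝ (Fin p) → ℝ)
    (hψdiff : Differentiable ℝ ψ)
    (ℓ : ℝ → ℝ) (hℓdiff : Differentiable ℝ ℓ)
    (f : EuclideanSpace ℝ (Fin m) → EuclideanSpace ℝ (Fin p) → ℝ)
    (hfdiff : ∀ a, Differentiable ℝ (fun w => f a w))
    (xi : EuclideanSpace ℝ (Fin m)) (yi : ℝ)
    (η : ℝ)
    (Li : EuclideanSpace ℝ (Fin p) → ℝ)
    (hLi : Li = fun w => ℓ (yi - f xi w))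
    (wi wim : EuclideanSpace ℝ (Fin p))
    (hupdate : gradient ψ wi = gradient ψ wim - η • gradient Li wim) :
    ∀ w : EuclideanSpace ℝ (Fin p),
      bregman ψ w wim + η * ℓ (yi - f xi w)
        = bregman ψ w wi + η * bregman Li w wim
          + (bregman (fun u => ψ u - η * Li u) wi wim + η * Li wi) := by
  subst hLi
  have hLi_diff : Differentiable ℝ fun w => ℓ (yi - f xi w) :=
    hℓdiff.comp ((differentiable_const yi).sub (hfdiff xi))
  exact bregman_conservation_of_gradient_eq (hψdiff wim) (hLi_diff wim) hupdate

/-- Local conservation law of SMD. -/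
theorem smd_local_conservation_law {m p : ℕ}
    (ψ : EuclideanSpace ℝ (Fin p) → ℝ)
    (hψdiff : Differentiable ℝ ψ)
    (hψconv : StrictConvexOn ℝ Set.univ ψ)
    (ℓ : ℝ → ℝ) (hℓdiff : Differentiable ℝ ℓ)
    (f : EuclideanSpace ℝ (Fin m) → EuclideanSpace ℝ (Fin p) → ℝ)
    (hfdiff : ∀ a, Differentiable ℝ (fun w => f a w))
    (xi : EuclideanSpace ℝ (Fin m)) (yi : ℝ)
    (η : ℝ) (hη : 0 < η)
    (Li : EuclideanSpace ℝ (Fin p) → ℝ)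
    (hLi : Li = fun w => ℓ (yi - f xi w))
    (wi wim : EuclideanSpace ℝ (Fin p))
    (hupdate : gradient ψ wi = gradient ψ wim - η • gradient Li wim) :
    ∀ w : EuclideanSpace ℝ (Fin p),
      bregman ψ w wim + η * ℓ (yi - f xi w)
        = bregman ψ w wi + η * bregman Li w wim
          + (bregman (fun u => ψ u - η * Li u) wi wim + η * Li wi) :=
  smd_local_conservation_law_general ψ hψdiff ℓ hℓdiff f hfdiff xi yi η Li hLi wi wim hupdate
end

section
/- (Global conservation law of SMD.) Under the setup of the local conservation law — ψ : ℝ^p → ℝ strictly convex differentiable, ℓ : ℝ → ℝ differentiable, f differentiable in its second argument, data (x_i, y_i) for i = 1, …, T, losses L_i(w) = ℓ(y_i − f(x_i, w)), η > 0, and SMD iterates satisfying ∇ψ(w_i) = ∇ψ(w_{i−1}) − η ∇L_i(w_{i−1}) for i = 1, …, T starting from w₀ — for every w ∈ ℝ^p, with v_i = y_i − f(x_i, w) and E_i(w_i, w_{i−1}) = D_{ψ−ηL_i}(w_i, w_{i−1}) + η L_i(w_i): D_ψ(w, w₀) + η ∑_{i=1}^T ℓ(v_i) = D_ψ(w, w_T)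 + η ∑_{i=1}^T D_{L_i}(w, w_{i−1}) + ∑_{i=1}^T E_i(w_i, w_{i−1}). -/
open RealInnerProductSpace

/-!
Each SMD step gives a local identity: since `∇(ψ - ηLᵢ)(wᵢ₋₁) = ∇ψ(wᵢ)` by the update rule, the
linear terms of `D_ψ(w, wᵢ₋₁)`, `D_ψ(w, wᵢ)`, `η D_{Lᵢ}(w, wᵢ₋₁)` and `D_{ψ-ηLᵢ}(wᵢ, wᵢ₋₁)` cancel
and `D_ψ(w, wᵢ₋₁) + η Lᵢ(w) = D_ψ(w, wᵢ) + η D_{Lᵢ}(w, wᵢ₋₁) + Eᵢ(wᵢ, wᵢ₋₁)`.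
Summing over `i = 1, …, T` telescopes the `D_ψ` terms.
-/

theorem gradient_sub_const_mul {F : Type*} [NormedAddCommGroup F] [InnerProductSpace ℝ F]
    [CompleteSpace F] {f g : F → ℝ} {x : F} (c : ℝ)
    (hf : DifferentiableAt ℝ f x) (hg : DifferentiableAt ℝ g x) :
    gradient (fun u => f u - c * g u) x = gradient f x - c • gradient g x := by
  simp only [gradient, fderiv_fun_sub hf (hg.const_mul c), fderiv_const_mul hg, map_sub, map_smul]

section MirrorDescent

variable {p : ℕ} {ψ : EuclideanSpace ℝ (Fin p) → ℝ} {η : ℝ}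

theorem mirror_step_conservation {L : EuclideanSpace ℝ (Fin p) → ℝ}
    {wPrev wNext : EuclideanSpace ℝ (Fin p)}
    (hψ : DifferentiableAt ℝ ψ wPrev) (hL : DifferentiableAt ℝ L wPrev)
    (hstep : gradient ψ wNext = gradient ψ wPrev - η • gradient L wPrev)
    (v : EuclideanSpace ℝ (Fin p)) :
    bregman ψ v wPrev + η * L v
      = bregman ψ v wNext + η * bregman L v wPrev
        + (bregman (fun u => ψ u - η * L u) wNext wPrev + η * L wNext) := by
  have hgrad : gradient (fun u => ψ u - η * L u) wPrev = gradient ψ wNext := by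
    rw [gradient_sub_const_mul η hψ hL, hstep]
  simp only [bregman, hgrad, hstep, inner_sub_left, inner_sub_right, real_inner_smul_left]
  ring

theorem mirror_descent_conservation {L : ℕ → EuclideanSpace ℝ (Fin p) → ℝ}
    {w : ℕ → EuclideanSpace ℝ (Fin p)} (hψ : Differentiable ℝ ψ)
    (hL : ∀ i, Differentiable ℝ (L i)) (T : ℕ)
    (hupdate : ∀ i ∈ Finset.Icc 1 T,
      gradient ψ (w i) = gradient ψ (w (i - 1)) - η • gradient (L i) (w (i - 1)))
    (v : EuclideanSpace ℝ (Fin p)) :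
    bregman ψ v (w 0) + η * ∑ i ∈ Finset.Icc 1 T, L i v
      = bregman ψ v (w T)
        + η * ∑ i ∈ Finset.Icc 1 T, bregman (L i) v (w (i - 1))
        + ∑ i ∈ Finset.Icc 1 T,
            (bregman (fun u => ψ u - η * L i u) (w i) (w (i - 1)) + η * L i (w i)) := by
  induction T with
  | zero => simp
  | succ T ih =>
    have hprev := ih fun i hi =>
      hupdate i (Finset.Icc_subset_Icc_right T.le_succ hi)
    have hlast := mirror_step_conservation (hψ (w T)) (hL (T + 1) (w T))
      (hupdate (T + 1) (Finset.right_mem_Icc.2 T.succ_pos)) v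
    simp only [Finset.sum_Icc_succ_top (Nat.le_add_left 1 T), Nat.add_sub_cancel] at hlast ⊢
    linear_combination hprev + hlast

end MirrorDescent

theorem smd_global_conservation_law_general {m p : ℕ}
    (ψ : EuclideanSpace ℝ (Fin p) → ℝ)
    (hψdiff : Differentiable ℝ ψ)
    (ℓ : ℝ → ℝ) (hℓdiff : Differentiable ℝ ℓ)
    (f : EuclideanSpace ℝ (Fin m) → EuclideanSpace ℝ (Fin p) → ℝ)
    (hfdiff : ∀ a, Differentiable ℝ (fun w => f a w))
    (x : ℕ → EuclideanSpace ℝ (Fin m)) (y : ℕ → ℝ)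
    (η : ℝ)
    (T : ℕ)
    (L : ℕ → EuclideanSpace ℝ (Fin p) → ℝ)
    (hL : ∀ i, L i = fun w => ℓ (y i - f (x i) w))
    (w : ℕ → EuclideanSpace ℝ (Fin p))
    (hupdate : ∀ i ∈ Finset.Icc 1 T,
      gradient ψ (w i) = gradient ψ (w (i - 1)) - η • gradient (L i) (w (i - 1))) :
    ∀ wv : EuclideanSpace ℝ (Fin p),
      bregman ψ wv (w 0) + η * ∑ i ∈ Finset.Icc 1 T, ℓ (y i - f (x i) wv)
        = bregman ψ wv (w T)
          + η * ∑ i ∈ Finset.Icc 1 T, bregman (L i) wv (w (i - 1))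
          + ∑ i ∈ Finset.Icc 1 T,
              (bregman (fun u => ψ u - η * L i u) (w i) (w (i - 1)) + η * L i (w i)) := by
  intro wv
  have hLdiff : ∀ i, Differentiable ℝ (L i) := fun i => by
    rw [hL i]
    exact hℓdiff.comp ((differentiable_const _).sub (hfdiff (x i)))
  have hLwv : ∀ i, L i wv = ℓ (y i - f (x i) wv) := fun i => by rw [hL i]
  simpa only [hLwv] using mirror_descent_conservation hψdiff hLdiff T hupdate wv

/-- Global conservation law of SMD over a horizon `T`. -/
theorem smd_global_conservation_law {m p : ℕ}
    (ψ : EuclideanSpace ℝ (Fin p) → ℝ)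
    (hψdiff : Differentiable ℝ ψ)
    (hψconv : StrictConvexOn ℝ Set.univ ψ)
    (ℓ : ℝ → ℝ) (hℓdiff : Differentiable ℝ ℓ)
    (f : EuclideanSpace ℝ (Fin m) → EuclideanSpace ℝ (Fin p) → ℝ)
    (hfdiff : ∀ a, Differentiable ℝ (fun w => f a w))
    (x : ℕ → EuclideanSpace ℝ (Fin m)) (y : ℕ → ℝ)
    (η : ℝ) (hη : 0 < η)
    (T : ℕ)
    (L : ℕ → EuclideanSpace ℝ (Fin p) → ℝ)
    (hL : ∀ i, L i = fun w => ℓ (y i - f (x i) w))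
    (w : ℕ → EuclideanSpace ℝ (Fin p))
    (hupdate : ∀ i ∈ Finset.Icc 1 T,
      gradient ψ (w i) = gradient ψ (w (i - 1)) - η • gradient (L i) (w (i - 1))) :
    ∀ wv : EuclideanSpace ℝ (Fin p),
      bregman ψ wv (w 0) + η * ∑ i ∈ Finset.Icc 1 T, ℓ (y i - f (x i) wv)
        = bregman ψ wv (w T)
          + η * ∑ i ∈ Finset.Icc 1 T, bregman (L i) wv (w (i - 1))
          + ∑ i ∈ Finset.Icc 1 T,
              (bregman (fun u => ψ u - η * L i u) (w i) (w (i - 1)) + η * L i (w i)) :=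
  smd_global_conservation_law_general ψ hψdiff ℓ hℓdiff f hfdiff x y η T L hL w hupdate
end
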